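/- arXiv:1703.00729 — 4 statements merged into one kernel-verified Lean document; each statement's English description precedes it below -/
import Mathlib

section
/- Let G = (A, B, E) be a d-mixing bipartite graph, let T ⊆ B be nonempty, and let ε > 0. Then the number of vertices a ∈ A such that | |Γ(a) ∩ T| - |T|/2 | > ε|T| is at most 2d²/(|T|ε²), where Γ(a) denotes the neighborhood of a. -/
open Finset Real

/-- Number of edges between `T ⊆ A` and `S ⊆ B` in the bipartite graph with
edge relation `E`. -/
def eCount {A B : Type*} (E : A → B → Bool) (T : Finset A) (S : Finset B) : ℕ :=
  ((T ×ˢ S).filter fun p => E p.1 p.2 = true).card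

/-- A bipartite graph on parts `A`, `B` with edge relation `E` is `d`-mixing if for
all `T ⊆ A`, `S ⊆ B`, `|e(S,T) - |S||T|/2| ≤ d √(|S||T|)`. -/
def IsMixing {A B : Type*} [Fintype A] [Fintype B] (E : A → B → Bool) (d : ℝ) : Prop :=
  ∀ (T : Finset A) (S : Finset B),
    |(eCount E T S : ℝ) - T.card * S.card / 2| ≤ d * Real.sqrt (T.card * S.card)

lemma eCount_eq_sum {A B : Type*} (E : A → B → Bool) (W : Finset A) (T : Finset B) :
    eCount E W T = ∑ a ∈ W, (T.filter fun b => E a b = true).card := by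
  classical
  unfold eCount
  rw [Finset.card_filter, Finset.sum_product]
  exact Finset.sum_congr rfl fun a _ => (Finset.card_filter _ _).symm

lemma aux_bound {A B : Type*} [Fintype A] [Fintype B] (E : A → B → Bool) (d : ℝ)
    (hmix : IsMixing E d) (T : Finset B) (hT : T.Nonempty) (ε : ℝ) (hε : 0 < ε)
    (W : Finset A)
    (h : (W.card : ℝ) * (ε * T.card) ≤ |(eCount E W T : ℝ) - W.card * T.card / 2|) :
    (W.card : ℝ) ≤ d ^ 2 / (T.card * ε ^ 2) := by
  have hTc : (0:ℝ) < T.card := by exact_mod_cast Finset.card_pos.mpr hT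
  rcases Finset.eq_empty_or_nonempty W with rfl | hW
  · simp
    positivity
  have hWc : (0:ℝ) < W.card := by exact_mod_cast Finset.card_pos.mpr hW
  have h2 := (h.trans (hmix W T))
  have hsq : Real.sqrt ((W.card : ℝ) * T.card) ^ 2 = (W.card : ℝ) * T.card :=
    Real.sq_sqrt (by positivity)
  have hsqpos : 0 < Real.sqrt ((W.card : ℝ) * T.card) := Real.sqrt_pos.mpr (by positivity)
  have hd : 0 ≤ d := by nlinarith
  rw [le_div_iff₀ (by positivity)]
  nlinarith [mul_le_mul h2 h2 (by positivity) (by positivity), hsq, mul_pos hWc hTc]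

open scoped Classical in
theorem unbalanced_vertices_bound
    {A B : Type*} [Fintype A] [Fintype B] (E : A → B → Bool) (d : ℝ)
    (hmix : IsMixing E d) (T : Finset B) (hT : T.Nonempty) (ε : ℝ) (hε : 0 < ε) :
    ((Finset.univ.filter fun a : A =>
        ε * T.card < |((T.filter fun b => E a b = true).card : ℝ) - T.card / 2|).card : ℝ)
      ≤ 2 * d ^ 2 / (T.card * ε ^ 2) := by
  have hTc : (0:ℝ) < T.card := by exact_mod_cast Finset.card_pos.mpr hT
  set deg : A → ℝ := fun a => ((T.filter fun b => E a b = true).card : ℝ) with hdeg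
  set Wp : Finset A := Finset.univ.filter (fun a : A => ε * T.card < deg a - T.card / 2) with hWp
  set Wm : Finset A := Finset.univ.filter (fun a : A => ε * T.card < T.card / 2 - deg a) with hWm
  have hsub : (Finset.univ.filter fun a : A =>
      ε * T.card < |((T.filter fun b => E a b = true).card : ℝ) - T.card / 2|) ⊆ Wp ∪ Wm := by
    intro a ha
    simp only [Finset.mem_filter, Finset.mem_univ, true_and] at ha
    simp only [hWp, hWm, Finset.mem_union, Finset.mem_filter, Finset.mem_univ, true_and]
    rcases abs_cases (deg a - T.card / 2) with ⟨he, _⟩ | ⟨he, _⟩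
    · left; rw [← he]; exact ha
    · right; rw [show (T.card:ℝ)/2 - deg a = -(deg a - T.card/2) by ring, ← he]; exact ha
  -- degree sum lemma
  have hsum : ∀ W : Finset A, (eCount E W T : ℝ) = ∑ a ∈ W, deg a := by
    intro W
    rw [eCount_eq_sum]
    push_cast
    rfl
  have hp : (Wp.card : ℝ) ≤ d ^ 2 / (T.card * ε ^ 2) := by
    apply aux_bound E d hmix T hT ε hε
    have : (Wp.card : ℝ) * (ε * T.card) ≤ (eCount E Wp T : ℝ) - Wp.card * T.card / 2 := by
      rw [hsum]
      have : (Wp.card : ℝ) * (ε * T.card) + Wp.card * ((T.card:ℝ)/2) ≤ ∑ a ∈ Wp, deg a := by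
        calc (Wp.card : ℝ) * (ε * T.card) + Wp.card * ((T.card:ℝ)/2)
            = ∑ _a ∈ Wp, (ε * T.card + (T.card:ℝ)/2) := by
              rw [Finset.sum_const, nsmul_eq_mul]; ring
          _ ≤ ∑ a ∈ Wp, deg a := by
              apply Finset.sum_le_sum
              intro a ha
              simp only [hWp, Finset.mem_filter] at ha
              linarith [ha.2]
      linarith
    exact le_trans this (le_abs_self _)
  have hm : (Wm.card : ℝ) ≤ d ^ 2 / (T.card * ε ^ 2) := by
    apply aux_bound E d hmix T hT ε hε
    have : (Wm.card : ℝ) * (ε * T.card) ≤ -((eCount E Wm T : ℝ) - Wm.card * T.card / 2) := by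
      rw [hsum]
      have : ∑ a ∈ Wm, deg a ≤ Wm.card * ((T.card:ℝ)/2) - (Wm.card : ℝ) * (ε * T.card) := by
        calc ∑ a ∈ Wm, deg a
            ≤ ∑ _a ∈ Wm, ((T.card:ℝ)/2 - ε * T.card) := by
              apply Finset.sum_le_sum
              intro a ha
              simp only [hWm, Finset.mem_filter] at ha
              linarith [ha.2]
          _ = Wm.card * ((T.card:ℝ)/2) - (Wm.card : ℝ) * (ε * T.card) := by
              rw [Finset.sum_const, nsmul_eq_mul]; ring
      linarith
    exact le_trans this (neg_le_abs _)
  calc ((Finset.univ.filter fun a : A =>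
        ε * T.card < |((T.filter fun b => E a b = true).card : ℝ) - T.card / 2|).card : ℝ)
      ≤ ((Wp ∪ Wm).card : ℝ) := by exact_mod_cast Finset.card_le_card hsub
    _ ≤ (Wp.card : ℝ) + Wm.card := by exact_mod_cast Finset.card_union_le _ _
    _ ≤ 2 * d ^ 2 / (T.card * ε ^ 2) := by rw [show (2:ℝ) * d^2 / (T.card * ε^2) = d^2/(T.card*ε^2) + d^2/(T.card*ε^2) by ring]; linarith
end

section
/- Suppose the hypothesis class H over finite domain X admits an r-sufficient partition, i.e., a partition X = X₁ ∪ ... ∪ X_r such that every h ∈ H is constant on each X_i. If H is d-mixing then d ≥ (1/2)·√(|H||X|/(2r)). Equivalently, the minimal d for which H is d-mixing satisfies d = Ω(√(|H||X|/r)), so MC(H) = O(√r). -/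
open Finset Real

theorem sufficient_partition_implies_not_mixing
    {H X : Type*} [Fintype H] [Fintype X] (f : H → X → Bool) (r : ℕ) (hr : 0 < r)
    (P : X → Fin r) (hpart : ∀ (h : H) (x y : X), P x = P y → f h x = f h y)
    (d : ℝ) (hd : 0 ≤ d) (hmix : IsMixing f d) :
    (1/2) * Real.sqrt (Fintype.card H * Fintype.card X / (2 * r)) ≤ d := by
  rcases Nat.eq_zero_or_pos (Fintype.card H) with hH | hH
  · simpa [hH] using hd
  rcases Nat.eq_zero_or_pos (Fintype.card X) with hX | hX
  · simpa [hX] using hd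
  haveI : Nonempty (Fin r) := ⟨⟨0, hr⟩⟩
  -- pigeonhole: some fiber of P has size ≥ |X|/r
  obtain ⟨i, -, hi⟩ : ∃ i ∈ (univ : Finset (Fin r)),
      Fintype.card X ≤ r * ((univ : Finset X).filter fun x => P x = i).card := by
    apply Finset.exists_le_of_sum_le Finset.univ_nonempty
    rw [← Finset.mul_sum,
      ← Finset.card_eq_sum_card_fiberwise (fun x _ => Finset.mem_univ (P x))]
    simp [Finset.card_univ, mul_comm]
  set S : Finset X := (univ : Finset X).filter fun x => P x = i with hSdef
  have hS0 : 0 < S.card := by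
    rcases Nat.eq_zero_or_pos S.card with h | h
    · rw [h, mul_zero] at hi; omega
    · exact h
  obtain ⟨x₀, hx₀⟩ := Finset.card_pos.1 hS0
  have hx₀i : P x₀ = i := (Finset.mem_filter.1 hx₀).2
  have hconst : ∀ (h : H), ∀ x ∈ S, f h x = f h x₀ := by
    intro h x hx
    exact hpart h x x₀ (by rw [(Finset.mem_filter.1 hx).2, hx₀i])
  -- a half-size class of hypotheses constant on S
  obtain ⟨T, hTcard, hT⟩ : ∃ T : Finset H, Fintype.card H ≤ 2 * T.card ∧
      ((∀ h ∈ T, f h x₀ = true) ∨ (∀ h ∈ T, f h x₀ = false)) := by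
    set Tt := (univ : Finset H).filter fun h => f h x₀ = true with hTt
    set Tf := (univ : Finset H).filter fun h => f h x₀ = false with hTf
    have hsum : Tt.card + Tf.card = Fintype.card H := by
      simpa [Finset.card_univ] using
        Finset.card_filter_add_card_filter_not
          (s := (univ : Finset H)) (p := fun h => f h x₀ = true)
    rcases le_or_gt (Fintype.card H) (2 * Tt.card) with h | h
    · exact ⟨Tt, h, Or.inl fun h hh => (Finset.mem_filter.1 hh).2⟩
    · exact ⟨Tf, by omega, Or.inr fun h hh => (Finset.mem_filter.1 hh).2⟩
  have hT0 : 0 < T.card := by omega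
  have habs : |(eCount f T S : ℝ) - T.card * S.card / 2| =
      (T.card : ℝ) * S.card / 2 := by
    rcases hT with hT | hT
    · have he : eCount f T S = T.card * S.card := by
        unfold eCount
        rw [Finset.filter_true_of_mem, Finset.card_product]
        rintro ⟨h, x⟩ hp
        rw [Finset.mem_product] at hp
        exact (hconst h x hp.2).trans (hT h hp.1)
      rw [he]; push_cast
      rw [sub_half, abs_of_nonneg (by positivity)]
    · have he : eCount f T S = 0 := by
        unfold eCount
        rw [Finset.filter_false_of_mem, Finset.card_empty]
        rintro ⟨h, x⟩ hp hc
        rw [Finset.mem_product] at hp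
        rw [(hconst h x hp.2).trans (hT h hp.1)] at hc
        exact Bool.false_ne_true hc
      rw [he]; push_cast
      rw [zero_sub, abs_neg, abs_of_nonneg (by positivity)]
  have hmix' := hmix T S
  rw [habs] at hmix'
  set x : ℝ := (T.card : ℝ) * S.card with hxdef
  have hxpos : 0 < x :=
    mul_pos (by exact_mod_cast hT0) (by exact_mod_cast hS0)
  have h1 : 0 < Real.sqrt x := Real.sqrt_pos.2 hxpos
  have h2 : Real.sqrt x * Real.sqrt x = x := Real.mul_self_sqrt hxpos.le
  have hsq : Real.sqrt x / 2 ≤ d := by nlinarith [hmix', h1, h2]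
  have hle : (Fintype.card H : ℝ) * Fintype.card X / (2 * r) ≤ x := by
    rw [div_le_iff₀ (by positivity)]
    have hA : (Fintype.card H : ℝ) ≤ 2 * T.card := by exact_mod_cast hTcard
    have hB : (Fintype.card X : ℝ) ≤ r * S.card := by exact_mod_cast hi
    have hc1 : (0:ℝ) ≤ (Fintype.card H : ℝ) := by positivity
    have hc2 : (0:ℝ) ≤ (Fintype.card X : ℝ) := by positivity
    nlinarith
  calc (1/2) * Real.sqrt (Fintype.card H * Fintype.card X / (2 * r))
      ≤ (1/2) * Real.sqrt x := by
        gcongr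
    _ = Real.sqrt x / 2 := by ring
    _ ≤ d := hsq
end

section
/- Let H_th be the class of discrete threshold functions: the domain is X = {0, 1/(n-1), ..., 1} of size n, and hypotheses h_b(x) = 1 iff x ≤ b, for n+1 thresholds giving all distinct behaviors. If H_th is d-mixing then d ≥ (1/2)·√(⌊n/2⌋ · ⌊(n+1)/2⌋); in particular d = Ω(√(|H_th|·|X|)). -/
open Finset Real

theorem thresholds_not_mixing (n : ℕ) (hn : 0 < n) (d : ℝ)
    (hmix : IsMixing (fun (k : Fin (n + 1)) (x : Fin n) => decide ((x : ℕ) < (k : ℕ))) d) :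
    (1/2) * Real.sqrt ((n / 2 : ℕ) * ((n + 1) / 2 : ℕ)) ≤ d := by
  -- d ≥ 0 from the full sets
  have hd0 : 0 ≤ d := by
    have h := hmix Finset.univ Finset.univ
    have hpos : (0:ℝ) < Real.sqrt ((Finset.univ : Finset (Fin (n+1))).card *
        (Finset.univ : Finset (Fin n)).card) := by
      apply Real.sqrt_pos.2
      have : (0:ℝ) < ((n+1 : ℕ) : ℝ) * (n : ℕ) := by
        positivity
      simpa [Fintype.card_fin] using this
    nlinarith [abs_nonneg ((eCount (fun (k : Fin (n + 1)) (x : Fin n) =>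
      decide ((x : ℕ) < (k : ℕ))) Finset.univ Finset.univ : ℝ) -
      (Finset.univ : Finset (Fin (n+1))).card * (Finset.univ : Finset (Fin n)).card / 2)]
  rcases Nat.lt_or_ge n 2 with h2 | h2
  · interval_cases n
    simp [hd0]
  · -- main case: n ≥ 2
    have hm : n / 2 < n := Nat.div_lt_self (by omega) (by norm_num)
    set T : Finset (Fin (n+1)) := Finset.Ioi ⟨n/2, by omega⟩ with hT
    set S : Finset (Fin n) := Finset.Iio ⟨n/2, hm⟩ with hS
    have hTcard : T.card = (n+1)/2 := by
      rw [hT, Fin.card_Ioi]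
      simp
      omega
    have hScard : S.card = n/2 := by
      rw [hS, Fin.card_Iio]
    have hecount : eCount (fun (k : Fin (n + 1)) (x : Fin n) =>
        decide ((x : ℕ) < (k : ℕ))) T S = T.card * S.card := by
      unfold eCount
      rw [Finset.filter_true_of_mem, Finset.card_product]
      rintro ⟨k, x⟩ hp
      rw [Finset.mem_product] at hp
      simp only [decide_eq_true_eq]
      have hk : (n/2 : ℕ) < k.val := by
        have := hp.1
        rw [hT, Finset.mem_Ioi] at this
        exact this
      have hx : x.val < n/2 := by
        have := hp.2
        rw [hS, Finset.mem_Iio] at this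
        exact this
      omega
    have h := hmix T S
    rw [hecount] at h
    set P : ℝ := (T.card : ℝ) * S.card with hP
    have hPpos : 0 < P := by
      rw [hP, hTcard, hScard]
      have h1 : 0 < n / 2 := by omega
      have h2 : 0 < (n+1) / 2 := by omega
      positivity
    have habs : |(↑(T.card * S.card) : ℝ) - (T.card : ℝ) * S.card / 2| = P / 2 := by
      push_cast
      rw [abs_of_nonneg] <;> [skip; skip] <;> rw [← hP] <;> nlinarith
    rw [habs] at h
    have hsq : Real.sqrt P * Real.sqrt P = P := Real.mul_self_sqrt hPpos.le
    have hsqpos : 0 < Real.sqrt P := Real.sqrt_pos.2 hPpos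
    have hkey : (1/2) * Real.sqrt P ≤ d := by
      nlinarith
    have : Real.sqrt ((n / 2 : ℕ) * ((n + 1) / 2 : ℕ)) = Real.sqrt P := by
      rw [hP, hTcard, hScard]
      ring_nf
    rw [this]
    exact hkey
end

section
/- Let G = (A, B, E) be a d-mixing bipartite graph, let T ⊆ B be nonempty, and let 0 < ε < 1/2. If |A| > 2d²/(|T|ε²), then there exists a ∈ A with (1/2 - ε)|T| ≤ |Γ(a) ∩ T| ≤ (1/2 + ε)|T|. -/
/-
If no vertex of `A` is balanced on `T`, then `A` splits into the vertices of degree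
below `(1/2 - ε)|T|` and those of degree above `(1/2 + ε)|T|`. On either part `S` the edge
count `e(S, T)` deviates from `|S||T|/2` by at least `ε|S||T|`, so the mixing bound
`d √(|S||T|)` forces `ε²|S||T| ≤ d²`. Adding the two parts gives
`ε²|A||T| ≤ 2d²`, against the assumed size of `A`.
-/

open Finset Real

lemma sq_mul_le_sq_of_mul_le_mul_sqrt {ε d x : ℝ} (hε : 0 ≤ ε) (hx : 0 ≤ x)
    (h : ε * x ≤ d * √x) : ε ^ 2 * x ≤ d ^ 2 := by
  rcases hx.eq_or_lt with rfl | hx₀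
  · simpa using sq_nonneg d
  have hεd : ε * √x ≤ d := by
    have h' : ε * √x * √x ≤ d * √x := by rwa [mul_assoc, mul_self_sqrt hx]
    exact le_of_mul_le_mul_right h' (sqrt_pos.2 hx₀)
  calc ε ^ 2 * x = (ε * √x) ^ 2 := by rw [mul_pow, sq_sqrt hx]
    _ ≤ d ^ 2 := pow_le_pow_left₀ (by positivity) hεd 2

section Bipartite

variable {A B : Type*} (E : A → B → Bool)

lemma eCount_eq_sum_card_filter (S : Finset A) (T : Finset B) :
    eCount E S T = ∑ a ∈ S, (T.filter fun b => E a b = true).card := by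
  rw [eCount, card_filter, sum_product]
  simp only [card_filter]

lemma eCount_le_of_forall_card_filter_le {S : Finset A} {T : Finset B} {c : ℝ}
    (h : ∀ a ∈ S, ((T.filter fun b => E a b = true).card : ℝ) ≤ c) :
    (eCount E S T : ℝ) ≤ S.card * c := by
  rw [eCount_eq_sum_card_filter, Nat.cast_sum, ← nsmul_eq_mul]
  exact sum_le_card_nsmul _ _ _ h

lemma le_eCount_of_forall_le_card_filter {S : Finset A} {T : Finset B} {c : ℝ}
    (h : ∀ a ∈ S, c ≤ ((T.filter fun b => E a b = true).card : ℝ)) :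
    S.card * c ≤ (eCount E S T : ℝ) := by
  rw [eCount_eq_sum_card_filter, Nat.cast_sum, ← nsmul_eq_mul]
  exact card_nsmul_le_sum _ _ _ h

variable [Fintype A] [Fintype B] {E} {d ε : ℝ}

lemma IsMixing.sq_mul_card_mul_card_le (hmix : IsMixing E d) (hε : 0 ≤ ε)
    {S : Finset A} {T : Finset B}
    (h : ε * (S.card * T.card) ≤ |(eCount E S T : ℝ) - S.card * T.card / 2|) :
    ε ^ 2 * (S.card * T.card) ≤ d ^ 2 :=
  sq_mul_le_sq_of_mul_le_mul_sqrt hε (by positivity) (h.trans (hmix S T))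

lemma IsMixing.sq_mul_card_mul_card_le_of_forall_low (hmix : IsMixing E d) (hε : 0 ≤ ε)
    {S : Finset A} {T : Finset B}
    (h : ∀ a ∈ S, ((T.filter fun b => E a b = true).card : ℝ) ≤ (1/2 - ε) * T.card) :
    ε ^ 2 * (S.card * T.card) ≤ d ^ 2 := by
  have hle := eCount_le_of_forall_card_filter_le E h
  refine hmix.sq_mul_card_mul_card_le hε (le_abs.2 (Or.inr ?_))
  linarith

lemma IsMixing.sq_mul_card_mul_card_le_of_forall_high (hmix : IsMixing E d) (hε : 0 ≤ ε)
    {S : Finset A} {T : Finset B}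
    (h : ∀ a ∈ S, (1/2 + ε) * T.card ≤ ((T.filter fun b => E a b = true).card : ℝ)) :
    ε ^ 2 * (S.card * T.card) ≤ d ^ 2 := by
  have hle := le_eCount_of_forall_le_card_filter E h
  refine hmix.sq_mul_card_mul_card_le hε (le_abs.2 (Or.inl ?_))
  linarith

end Bipartite

theorem exists_balanced_vertex_general
    {A B : Type*} [Fintype A] [Fintype B] (E : A → B → Bool) (d : ℝ)
    (hmix : IsMixing E d) (T : Finset B) (hT : T.Nonempty) (ε : ℝ)
    (hε : 0 < ε)
    (hA : 2 * d ^ 2 / (T.card * ε ^ 2) < (Fintype.card A : ℝ)) :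
    ∃ a : A, (1/2 - ε) * T.card ≤ ((T.filter fun b => E a b = true).card : ℝ) ∧
      ((T.filter fun b => E a b = true).card : ℝ) ≤ (1/2 + ε) * T.card := by
  classical
  by_contra! hcon
  set deg : A → ℝ := fun a => ((T.filter fun b => E a b = true).card : ℝ)
  set low := univ.filter fun a => deg a < (1/2 - ε) * T.card
  set high := univ.filter fun a => (1/2 + ε) * T.card < deg a
  have hlow : ε ^ 2 * (low.card * T.card) ≤ d ^ 2 :=
    hmix.sq_mul_card_mul_card_le_of_forall_low hε.le fun a ha => (mem_filter.1 ha).2.le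
  have hhigh : ε ^ 2 * (high.card * T.card) ≤ d ^ 2 :=
    hmix.sq_mul_card_mul_card_le_of_forall_high hε.le fun a ha => (mem_filter.1 ha).2.le
  have hcover : (Fintype.card A : ℝ) ≤ low.card + high.card := by
    have hsub : univ ⊆ low ∪ high := fun a _ => by
      by_cases ha : deg a < (1/2 - ε) * T.card
      · exact mem_union_left _ (mem_filter.2 ⟨mem_univ a, ha⟩)
      · exact mem_union_right _ (mem_filter.2 ⟨mem_univ a, hcon a (not_lt.1 ha)⟩)
    exact_mod_cast (card_le_card hsub).trans (card_union_le _ _)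
  have hTε : 0 < (T.card : ℝ) * ε ^ 2 := by positivity
  rw [div_lt_iff₀ hTε] at hA
  nlinarith

theorem exists_balanced_vertex
    {A B : Type*} [Fintype A] [Fintype B] (E : A → B → Bool) (d : ℝ)
    (hmix : IsMixing E d) (T : Finset B) (hT : T.Nonempty) (ε : ℝ)
    (hε : 0 < ε) (hε' : ε < 1/2)
    (hA : 2 * d ^ 2 / (T.card * ε ^ 2) < (Fintype.card A : ℝ)) :
    ∃ a : A, (1/2 - ε) * T.card ≤ ((T.filter fun b => E a b = true).card : ℝ) ∧
      ((T.filter fun b => E a b = true).card : ℝ) ≤ (1/2 + ε) * T.card :=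
  exists_balanced_vertex_general E d hmix T hT ε hε hA
end
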